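/- Under the Euler-scheme setting below, for every n ≥ 0 and all indices 0 ≤ r, j ≤ 2^n, ‖y(t^n_j) − y(t^n_r) − f(y(t^n_r))·(x(t^n_j) − x(t^n_r))‖ ≤ G₂·|t^n_j − t^n_r|^{2α}, where G₂ = max{ (2ω^{−α} + ω^{−1−α})·(L + hFC_α), L }, L = (4/(1 − 2^{1−2α}))·(hC_α)²·F₁·F, and ω = (hFC_α/L)^{1/α}. -/

import Mathlib

/-!
The remainder `R(r, j) = y_j - y_r - f(y_r) (x_j - x_r)` of the Euler scheme vanishes over a single
step and satisfies Chen's relation `R(r, j) = R(r, m) + R(m, j) + (f(y_m) - f(y_r)) (x_j - x_m)`.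
Splitting `[r, r + k]` at `m = r + ⌊k/2⌋`, the cross term is at most
`hF₁C_α δ^α (L δ^{2α} + hFC_α δ^α)`, and as long as `δ = k 2^{-n}` stays below `ω` it is absorbed
by the gain `1 - 2^{1-2α}` of bisecting; strong induction on `k` then gives `‖R‖ ≤ L δ^{2α}`.
Above the scale `ω`, the increment of `y` is chained from about `2δ/ω` increments over intervals of
length at most `ω` (single steps if the mesh exceeds `ω`), and then `‖R‖ ≤ ‖Δy‖ + hF ‖Δx‖` is
already of order `δ^{2α}`. A backward remainder `R(j, r)` differs from `-R(r, j)` by one more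
cross term.
-/

noncomputable section

/-- Maximum-absolute-entry norm of a vector. -/
def vnorm {d : ℕ} (v : Fin d → ℝ) : ℝ := ⨆ i, |v i|

open Real
open scoped Matrix

theorem one_sub_two_rpow_neg_le (s : ℝ) : 1 - (2:ℝ) ^ (-s) ≤ s * log 2 := by
  have := add_one_le_exp (log 2 * -s)
  rw [rpow_def_of_pos two_pos]
  linarith

/-- Bisecting an interval of length `δ` into halves saves `(1 - 2 ^ (1 - 2α)) δ ^ (2α)`; half of
the saving pays for the uneven split `⌊k/2⌋ + ⌈k/2⌉`, the other half for the cross term. -/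
def halvingGain (α : ℝ) : ℝ := (1 - 2 ^ (1 - 2 * α)) / 4

theorem halvingGain_pos {α : ℝ} (hα : 1 / 2 < α) : 0 < halvingGain α := by
  have : (2:ℝ) ^ (1 - 2 * α) < 1 := rpow_lt_one_of_one_lt_of_neg one_lt_two (by linarith)
  unfold halvingGain
  linarith

theorem halvingGain_le_one_fourth (α : ℝ) : halvingGain α ≤ 1 / 4 := by
  have : (0:ℝ) < 2 ^ (1 - 2 * α) := rpow_pos_of_pos two_pos _
  unfold halvingGain
  linarith

theorem rpow_add_rpow_add_halvingGain_le {α a b : ℝ} (hα : 1 / 2 < α) (hα1 : α ≤ 1) (ha : 0 ≤ a)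
    (hab : a ≤ b) (hba : b ≤ 2 * a) :
    a ^ (2 * α) + b ^ (2 * α) + 2 * halvingGain α * (a + b) ^ (2 * α) ≤ (a + b) ^ (2 * α) := by
  set s := 2 * α - 1
  have hs0 : 0 < s := by linarith
  have hexp : 2 * α = s + 1 := by ring
  have hneg : 1 - 2 * α = -s := by ring
  rw [halvingGain, hneg, hexp, rpow_add_one' ha (by linarith),
    rpow_add_one' (by linarith) (by linarith), rpow_add_one' (by linarith) (by linarith)]
  set u := (a + b) ^ s
  have hu : 0 ≤ u := rpow_nonneg (by linarith) s
  have bernoulli : ∀ c : ℝ, 0 ≤ c → c ≤ 1 → (1 - c) ^ s ≤ 1 - s * c := fun c hc0 hc1 => by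
    simpa [sub_eq_add_neg] using
      rpow_one_add_le_one_add_mul_self (s := -c) (by linarith) hs0.le (by linarith)
  have hsa : a ^ s ≤ (1 - s / 2) * u := calc
    a ^ s ≤ ((1 - 1 / 2) * (a + b)) ^ s := rpow_le_rpow ha (by linarith) hs0.le
    _ = (1 - 1 / 2) ^ s * u := mul_rpow (by norm_num) (by linarith)
    _ ≤ (1 - s / 2) * u := by
      gcongr
      linarith [bernoulli (1 / 2) (by norm_num) (by norm_num)]
  have hsb : b ^ s ≤ (1 - s / 3) * u := calc
    b ^ s ≤ ((1 - 1 / 3) * (a + b)) ^ s := rpow_le_rpow (by linarith) (by linarith) hs0.le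
    _ = (1 - 1 / 3) ^ s * u := mul_rpow (by norm_num) (by linarith)
    _ ≤ (1 - s / 3) * u := by
      gcongr
      linarith [bernoulli (1 / 3) (by norm_num) (by norm_num)]
  have hgain : 2 * ((1 - (2:ℝ) ^ (-s)) / 4) ≤ s * log 2 / 2 := by
    linarith [one_sub_two_rpow_neg_le s]
  have hlog : log 2 < 0.7 := log_two_lt_d9.trans (by norm_num)
  have hkey : 0 ≤ u * s * (a / 2 + b / 3 - log 2 / 2 * (a + b)) :=
    mul_nonneg (mul_nonneg hu hs0.le) (by nlinarith)
  nlinarith [mul_le_mul_of_nonneg_left hsa ha, mul_le_mul_of_nonneg_left hsb (ha.trans hab),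
    mul_le_mul_of_nonneg_right hgain (mul_nonneg (add_nonneg ha (ha.trans hab)) hu)]

theorem mul_rpow_mul_add_le {α ε L P Q a b δ : ℝ} (hα : 0 < α) (hL : 0 ≤ L) (hQ : 0 ≤ Q)
    (hQP : Q * P = ε * L) (ha : 0 ≤ a) (haδ : a ≤ δ) (hb : 0 ≤ b) (hbδ : b ≤ δ)
    (hδ : Q * δ ^ α ≤ ε) :
    Q * b ^ α * (L * a ^ (2 * α) + P * a ^ α) ≤ 2 * ε * L * δ ^ (2 * α) := by
  have hQb : Q * b ^ α ≤ ε :=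
    (mul_le_mul_of_nonneg_left (rpow_le_rpow hb hbδ hα.le) hQ).trans hδ
  have hε : 0 ≤ ε := (mul_nonneg hQ (rpow_nonneg hb α)).trans hQb
  have ha2 : a ^ (2 * α) ≤ δ ^ (2 * α) := rpow_le_rpow ha haδ (by linarith)
  have hab : a ^ α * b ^ α ≤ δ ^ (2 * α) := by
    rw [two_mul, rpow_add' (ha.trans haδ) (by linarith)]
    exact mul_le_mul (rpow_le_rpow ha haδ hα.le) (rpow_le_rpow hb hbδ hα.le)
      (rpow_nonneg hb α) (rpow_nonneg (ha.trans haδ) α)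
  calc Q * b ^ α * (L * a ^ (2 * α) + P * a ^ α)
      = Q * b ^ α * (L * a ^ (2 * α)) + Q * P * (a ^ α * b ^ α) := by ring
    _ ≤ ε * (L * δ ^ (2 * α)) + ε * L * δ ^ (2 * α) := by
      rw [hQP]
      exact add_le_add (mul_le_mul hQb (mul_le_mul_of_nonneg_left ha2 hL)
        (mul_nonneg hL (rpow_nonneg ha _)) hε) (mul_le_mul_of_nonneg_left hab (mul_nonneg hε hL))
    _ = 2 * ε * L * δ ^ (2 * α) := by ring

theorem halving_step_le {α L P Q a b : ℝ} (hα : 1 / 2 < α) (hα1 : α ≤ 1) (hL : 0 ≤ L) (hQ : 0 ≤ Q)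
    (hQP : Q * P = halvingGain α * L) (ha : 0 ≤ a) (hab : a ≤ b) (hba : b ≤ 2 * a)
    (hsmall : Q * (a + b) ^ α ≤ halvingGain α) :
    L * a ^ (2 * α) + L * b ^ (2 * α) + Q * b ^ α * (L * a ^ (2 * α) + P * a ^ α) ≤
      L * (a + b) ^ (2 * α) := by
  have hcross := mul_rpow_mul_add_le (a := a) (b := b) (δ := a + b) (by linarith) hL hQ hQP ha
    (by linarith) (by linarith) (by linarith) hsmall
  have hsplit := mul_le_mul_of_nonneg_left (rpow_add_rpow_add_halvingGain_le hα hα1 ha hab hba) hL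
  linarith

theorem rpow_sub_one_mul_le {α ω δ : ℝ} (hα : 1 / 2 ≤ α) (hω : 0 < ω) (hωδ : ω ≤ δ) :
    ω ^ (α - 1) * δ ≤ ω ^ (-α) * δ ^ (2 * α) := by
  have hδ : 0 < δ := hω.trans_le hωδ
  calc ω ^ (α - 1) * δ = ω ^ (-α) * (ω ^ (2 * α - 1) * δ) := by
        rw [← mul_assoc, ← rpow_add hω]; ring_nf
    _ ≤ ω ^ (-α) * (δ ^ (2 * α - 1) * δ) := by
        gcongr
        linarith
    _ = ω ^ (-α) * δ ^ (2 * α) := by rw [← rpow_add_one hδ.ne']; ring_nf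

theorem rpow_le_rpow_neg_one_sub_mul {α ω δ : ℝ} (hα : 0 ≤ α) (hω : 0 < ω) (hω1 : ω ≤ 1)
    (hωδ : ω ≤ δ) : δ ^ α ≤ ω ^ (-1 - α) * δ ^ (2 * α) := by
  have hδ : 0 < δ := hω.trans_le hωδ
  have h1 : 1 ≤ ω ^ (-1 : ℝ) := one_le_rpow_of_pos_of_le_one_of_nonpos hω hω1 (by norm_num)
  have h2 : 1 ≤ ω ^ (-α) * δ ^ α := by
    rw [rpow_neg hω.le, inv_mul_eq_div, one_le_div (rpow_pos_of_pos hω α)]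
    exact rpow_le_rpow hω.le hωδ hα
  have : ω ^ (-1 - α) * δ ^ (2 * α) = δ ^ α * (ω ^ (-1 : ℝ) * (ω ^ (-α) * δ ^ α)) := by
    rw [sub_eq_add_neg, rpow_add hω, two_mul, rpow_add hδ]
    ring
  rw [this]
  exact le_mul_of_one_le_right (rpow_nonneg hδ.le α) (one_le_mul_of_one_le_of_one_le h1 h2)

section Chaining

variable {E : Type*} [SeminormedAddCommGroup E]

theorem norm_sub_le_mul_of_pieces {Z : ℕ → E} {N q : ℕ} {M : ℝ}
    (hpiece : ∀ a p, a + p ≤ N → p ≤ q → ‖Z (a + p) - Z a‖ ≤ M) :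
    ∀ m r k, k ≤ m * q → r + k ≤ N → ‖Z (r + k) - Z r‖ ≤ m * M := by
  intro m
  induction m with
  | zero =>
    intro r k hk _
    simp [show k = 0 by simpa using hk]
  | succ m ih =>
    intro r k hk hrk
    rw [Nat.succ_mul] at hk
    obtain ⟨p, l, rfl, hpq, hlm⟩ : ∃ p l, k = p + l ∧ p ≤ q ∧ l ≤ m * q :=
      ⟨min k q, k - min k q, by omega, by omega, by omega⟩
    calc ‖Z (r + (p + l)) - Z r‖ ≤ ‖Z (r + p + l) - Z (r + p)‖ + ‖Z (r + p) - Z r‖ := by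
          rw [← add_assoc]; exact norm_sub_le_norm_sub_add_norm_sub _ _ _
      _ ≤ m * M + M := add_le_add (ih _ _ hlm (by omega)) (hpiece _ _ (by omega) hpq)
      _ = (m + 1 : ℕ) * M := by push_cast; ring

/-- `(k - 1) / q + 1 = ⌈k / q⌉` pieces of length at most `q` cover `k`. -/
theorem sub_one_div_add_one_mul_le {k q : ℕ} (hq : 1 ≤ q) (hqk : q ≤ k) :
    ((k - 1) / q + 1) * (q + 1) ≤ 2 * k ∧ k ≤ ((k - 1) / q + 1) * q := by
  obtain ⟨k, rfl⟩ : ∃ k', k = k' + 1 := ⟨k - 1, by omega⟩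
  simp only [Nat.add_sub_cancel]
  have h1 : q * (k / q) ≤ k := Nat.mul_div_le k q
  have h2 : k < q * (k / q + 1) := Nat.lt_mul_div_succ k (by omega)
  constructor
  · rcases Nat.eq_zero_or_pos (k / q) with h | h
    · rw [h]; omega
    · nlinarith
  · nlinarith

theorem norm_sub_le_of_pieces {Z : ℕ → E} {N q r k : ℕ} {M : ℝ} (hq : 1 ≤ q) (hqk : q ≤ k)
    (hrk : r + k ≤ N) (hpiece : ∀ a p, a + p ≤ N → p ≤ q → ‖Z (a + p) - Z a‖ ≤ M) :
    ‖Z (r + k) - Z r‖ ≤ 2 * k / (q + 1) * M := by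
  obtain ⟨hcount, hcover⟩ := sub_one_div_add_one_mul_le hq hqk
  have hM : 0 ≤ M := (norm_nonneg _).trans (hpiece 0 0 (by omega) (by omega))
  calc ‖Z (r + k) - Z r‖ ≤ ((k - 1) / q + 1 : ℕ) * M :=
        norm_sub_le_mul_of_pieces hpiece _ r k hcover hrk
    _ ≤ 2 * k / (q + 1) * M := by
        gcongr
        rw [le_div_iff₀ (by positivity)]
        exact_mod_cast hcount

end Chaining

section EulerScheme

variable {E V : Type*} [NormedAddCommGroup E] [NormedSpace ℝ E]
  [NormedAddCommGroup V] [NormedSpace ℝ V]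

def eulerRemainder (A : E → V →L[ℝ] E) (Y : ℕ → E) (X : ℕ → V) (r j : ℕ) : E :=
  Y j - Y r - A (Y r) (X j - X r)

variable {A : E → V →L[ℝ] E} {Y : ℕ → E} {X : ℕ → V}

theorem eulerRemainder_self (r : ℕ) : eulerRemainder A Y X r r = 0 := by
  simp [eulerRemainder]

theorem eulerRemainder_succ {N k : ℕ} (hY : ∀ k < N, Y (k + 1) = Y k + A (Y k) (X (k + 1) - X k))
    (hk : k < N) : eulerRemainder A Y X k (k + 1) = 0 := by
  simp [eulerRemainder, hY k hk]

theorem eulerRemainder_add (r m j : ℕ) :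
    eulerRemainder A Y X r j = eulerRemainder A Y X r m + eulerRemainder A Y X m j +
      (A (Y m) - A (Y r)) (X j - X m) := by
  simp only [eulerRemainder, sub_apply, map_sub]
  abel

theorem eulerRemainder_swap (r j : ℕ) :
    eulerRemainder A Y X j r = -eulerRemainder A Y X r j + (A (Y j) - A (Y r)) (X j - X r) := by
  simp only [eulerRemainder, sub_apply, map_sub]
  abel

theorem eulerRemainder_eq_zero_of_const {N : ℕ}
    (hY : ∀ k < N, Y (k + 1) = Y k + A (Y k) (X (k + 1) - X k)) (hA : ∀ y z, A y = A z)
    {r j : ℕ} (hr : r ≤ N) (hj : j ≤ N) : eulerRemainder A Y X r j = 0 := by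
  have hY' : ∀ k ≤ N, Y k = Y 0 + A (Y 0) (X k - X 0) := by
    intro k hk
    induction k with
    | zero => simp
    | succ k ih =>
      rw [hY k hk, hA (Y k) (Y 0), ih (by omega)]
      simp only [map_sub]
      abel
  rw [eulerRemainder, hA (Y r) (Y 0), hY' j hj, hY' r hr]
  simp only [map_sub]
  abel

variable {N : ℕ} {α τ C K K₁ L : ℝ}

theorem norm_eulerRemainder_le (hA : ∀ y, ‖A y‖ ≤ K) (r j : ℕ) :
    ‖eulerRemainder A Y X r j‖ ≤ ‖Y j - Y r‖ + K * ‖X j - X r‖ :=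
  (norm_sub_le _ _).trans (add_le_add le_rfl ((A (Y r)).le_of_opNorm_le (hA _) _))

theorem norm_eulerRemainder_add_le (hA₁ : ∀ y z, ‖A y - A z‖ ≤ K₁ * ‖y - z‖) (r m j : ℕ) :
    ‖eulerRemainder A Y X r j‖ ≤ ‖eulerRemainder A Y X r m‖ + ‖eulerRemainder A Y X m j‖ +
      K₁ * ‖Y m - Y r‖ * ‖X j - X m‖ := by
  rw [eulerRemainder_add r m]
  exact (norm_add_le _ _).trans
    (add_le_add (norm_add_le _ _) ((A (Y m) - A (Y r)).le_of_opNorm_le (hA₁ _ _) _))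

theorem norm_eulerRemainder_swap_le (hA₁ : ∀ y z, ‖A y - A z‖ ≤ K₁ * ‖y - z‖) (r j : ℕ) :
    ‖eulerRemainder A Y X j r‖ ≤ ‖eulerRemainder A Y X r j‖ +
      K₁ * ‖Y j - Y r‖ * ‖X j - X r‖ := by
  rw [eulerRemainder_swap r j]
  exact (norm_add_le _ _).trans
    (add_le_add (norm_neg _).le ((A (Y j) - A (Y r)).le_of_opNorm_le (hA₁ _ _) _))

theorem norm_sub_le_of_norm_eulerRemainder_le (hA : ∀ y, ‖A y‖ ≤ K)
    (hX : ∀ r k, r + k ≤ N → ‖X (r + k) - X r‖ ≤ C * (k * τ) ^ α) {r k : ℕ} (hrk : r + k ≤ N)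
    {B : ℝ} (hB : ‖eulerRemainder A Y X r (r + k)‖ ≤ B) :
    ‖Y (r + k) - Y r‖ ≤ B + K * C * (k * τ) ^ α := by
  have hK : 0 ≤ K := (norm_nonneg _).trans (hA 0)
  have hdecomp : Y (r + k) - Y r =
      eulerRemainder A Y X r (r + k) + A (Y r) (X (r + k) - X r) := by
    simp [eulerRemainder]
  calc ‖Y (r + k) - Y r‖ ≤ ‖eulerRemainder A Y X r (r + k)‖ + K * ‖X (r + k) - X r‖ := by
        rw [hdecomp]
        exact (norm_add_le _ _).trans (add_le_add le_rfl ((A (Y r)).le_of_opNorm_le (hA _) _))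
    _ ≤ B + K * (C * (k * τ) ^ α) := by gcongr; exact hX r k hrk
    _ = B + K * C * (k * τ) ^ α := by ring

theorem norm_eulerRemainder_le_of_small (hα : 1 / 2 < α) (hα1 : α ≤ 1) (hτ : 0 ≤ τ) (hC : 0 ≤ C)
    (hK₁ : 0 ≤ K₁) (hL : 0 ≤ L) (hLK : K₁ * C * (K * C) = halvingGain α * L)
    (hA : ∀ y, ‖A y‖ ≤ K) (hA₁ : ∀ y z, ‖A y - A z‖ ≤ K₁ * ‖y - z‖)
    (hX : ∀ r k, r + k ≤ N → ‖X (r + k) - X r‖ ≤ C * (k * τ) ^ α)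
    (hY : ∀ k < N, Y (k + 1) = Y k + A (Y k) (X (k + 1) - X k)) :
    ∀ k r, r + k ≤ N → K₁ * C * (k * τ) ^ α ≤ halvingGain α →
      ‖eulerRemainder A Y X r (r + k)‖ ≤ L * (k * τ) ^ (2 * α) := by
  intro k
  induction k using Nat.strong_induction_on with
  | _ k ih =>
  intro r hrk hsmall
  rcases lt_or_ge k 2 with hk | hk
  · interval_cases k
    · simpa [eulerRemainder_self] using mul_nonneg hL (rpow_nonneg le_rfl _)
    · rw [eulerRemainder_succ hY (by omega), norm_zero]
      positivity
  obtain ⟨p, q, rfl, hpq, hqp⟩ : ∃ p q, k = p + q ∧ p ≤ q ∧ q ≤ 2 * p :=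
    ⟨k / 2, k - k / 2, by omega, by omega, by omega⟩
  have hsmall' : ∀ l ≤ p + q, K₁ * C * (l * τ) ^ α ≤ halvingGain α := fun l hl => by
    refine le_trans ?_ hsmall
    gcongr
  have ihp := ih p (by omega) r (by omega) (hsmall' p (by omega))
  have ihq := ih q (by omega) (r + p) (by omega) (hsmall' q (by omega))
  have hYp := norm_sub_le_of_norm_eulerRemainder_le hA hX (by omega) ihp
  have hXq := hX (r + p) q (by omega)
  have hcoef : 0 ≤ K₁ * (L * (p * τ) ^ (2 * α) + K * C * (p * τ) ^ α) :=
    mul_nonneg hK₁ ((norm_nonneg _).trans hYp)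
  have hsum : ((p + q : ℕ) : ℝ) * τ = p * τ + q * τ := by push_cast; ring
  rw [← add_assoc]
  calc ‖eulerRemainder A Y X r (r + p + q)‖
      ≤ ‖eulerRemainder A Y X r (r + p)‖ + ‖eulerRemainder A Y X (r + p) (r + p + q)‖ +
          K₁ * ‖Y (r + p) - Y r‖ * ‖X (r + p + q) - X (r + p)‖ :=
        norm_eulerRemainder_add_le hA₁ _ _ _
    _ ≤ L * (p * τ) ^ (2 * α) + L * (q * τ) ^ (2 * α) +
          K₁ * (L * (p * τ) ^ (2 * α) + K * C * (p * τ) ^ α) * (C * (q * τ) ^ α) := by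
        gcongr
    _ = L * (p * τ) ^ (2 * α) + L * (q * τ) ^ (2 * α) +
          K₁ * C * (q * τ) ^ α * (L * (p * τ) ^ (2 * α) + K * C * (p * τ) ^ α) := by ring
    _ ≤ L * ((p + q : ℕ) * τ) ^ (2 * α) := by
        rw [hsum]
        refine halving_step_le hα hα1 hL (by positivity) hLK (by positivity) ?_ ?_ ?_
        · gcongr
        · rw [← mul_assoc]; gcongr; exact_mod_cast hqp
        · rw [← hsum]; exact hsmall

theorem norm_eulerRemainder_swap_le_of_small (hα : 1 / 2 < α) (hα1 : α ≤ 1) (hτ : 0 ≤ τ)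
    (hC : 0 ≤ C) (hK₁ : 0 ≤ K₁) (hL : 0 ≤ L) (hLK : K₁ * C * (K * C) = halvingGain α * L)
    (hA : ∀ y, ‖A y‖ ≤ K) (hA₁ : ∀ y z, ‖A y - A z‖ ≤ K₁ * ‖y - z‖)
    (hX : ∀ r k, r + k ≤ N → ‖X (r + k) - X r‖ ≤ C * (k * τ) ^ α)
    (hY : ∀ k < N, Y (k + 1) = Y k + A (Y k) (X (k + 1) - X k)) {r k : ℕ} (hrk : r + k ≤ N)
    (hsmall : K₁ * C * (k * τ) ^ α ≤ halvingGain α) :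
    ‖eulerRemainder A Y X (r + k) r‖ ≤ 2 * L * (k * τ) ^ (2 * α) := by
  have hfwd :=
    norm_eulerRemainder_le_of_small hα hα1 hτ hC hK₁ hL hLK hA hA₁ hX hY k r hrk hsmall
  have hYk := norm_sub_le_of_norm_eulerRemainder_le hA hX hrk hfwd
  have hcoef : 0 ≤ K₁ * (L * (k * τ) ^ (2 * α) + K * C * (k * τ) ^ α) :=
    mul_nonneg hK₁ ((norm_nonneg _).trans hYk)
  have hcross := mul_rpow_mul_add_le (by linarith) hL (by positivity) hLK (by positivity) le_rfl
    (by positivity) le_rfl hsmall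
  have hgain := halvingGain_le_one_fourth α
  have hLδ : 0 ≤ L * (k * τ) ^ (2 * α) := by positivity
  calc ‖eulerRemainder A Y X (r + k) r‖
      ≤ ‖eulerRemainder A Y X r (r + k)‖ + K₁ * ‖Y (r + k) - Y r‖ * ‖X (r + k) - X r‖ :=
        norm_eulerRemainder_swap_le hA₁ r (r + k)
    _ ≤ L * (k * τ) ^ (2 * α) +
          K₁ * (L * (k * τ) ^ (2 * α) + K * C * (k * τ) ^ α) * (C * (k * τ) ^ α) := by
        gcongr
        exact hX r k hrk
    _ = L * (k * τ) ^ (2 * α) +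
          K₁ * C * (k * τ) ^ α * (L * (k * τ) ^ (2 * α) + K * C * (k * τ) ^ α) := by ring
    _ ≤ 2 * L * (k * τ) ^ (2 * α) := by nlinarith

theorem norm_sub_le_of_unit_steps (hτ : 0 ≤ τ) (hC : 0 ≤ C) (hA : ∀ y, ‖A y‖ ≤ K)
    (hX : ∀ r k, r + k ≤ N → ‖X (r + k) - X r‖ ≤ C * (k * τ) ^ α)
    (hY : ∀ k < N, Y (k + 1) = Y k + A (Y k) (X (k + 1) - X k)) {r k : ℕ} (hrk : r + k ≤ N) :
    ‖Y (r + k) - Y r‖ ≤ k * (K * C * τ ^ α) := by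
  have hK : 0 ≤ K := (norm_nonneg _).trans (hA 0)
  refine norm_sub_le_mul_of_pieces (q := 1) (fun a p hap hp => ?_) k r k (by simp) hrk
  interval_cases p
  · simpa using mul_nonneg (mul_nonneg hK hC) (rpow_nonneg hτ α)
  · simpa using norm_sub_le_of_norm_eulerRemainder_le hA hX hap (B := 0)
      (by rw [eulerRemainder_succ hY (by omega), norm_zero])

theorem norm_sub_le_of_le_scale {ω : ℝ} (hα : 1 / 2 < α) (hα1 : α ≤ 1) (hτ : 0 ≤ τ)
    (hC : 0 ≤ C) (hK₁ : 0 ≤ K₁) (hL : 0 ≤ L) (hLK : K₁ * C * (K * C) = halvingGain α * L)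
    (hA : ∀ y, ‖A y‖ ≤ K) (hA₁ : ∀ y z, ‖A y - A z‖ ≤ K₁ * ‖y - z‖)
    (hX : ∀ r k, r + k ≤ N → ‖X (r + k) - X r‖ ≤ C * (k * τ) ^ α)
    (hY : ∀ k < N, Y (k + 1) = Y k + A (Y k) (X (k + 1) - X k))
    (hω1 : ω ≤ 1) (hωsmall : K₁ * C * ω ^ α ≤ halvingGain α) {r k : ℕ} (hrk : r + k ≤ N)
    (hk : k * τ ≤ ω) :
    ‖Y (r + k) - Y r‖ ≤ (L + K * C) * ω ^ α := by
  have hK : 0 ≤ K := (norm_nonneg _).trans (hA 0)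
  have hα0 : 0 ≤ α := by linarith
  have hkα : (k * τ) ^ α ≤ ω ^ α := rpow_le_rpow (by positivity) hk hα0
  have hk2α : (k * τ) ^ (2 * α) ≤ (k * τ) ^ α :=
    rpow_le_rpow_of_exponent_ge' (by positivity) (hk.trans hω1) hα0 (by linarith)
  have hsmall : K₁ * C * (k * τ) ^ α ≤ halvingGain α := le_trans (by gcongr) hωsmall
  calc ‖Y (r + k) - Y r‖ ≤ L * (k * τ) ^ (2 * α) + K * C * (k * τ) ^ α :=
        norm_sub_le_of_norm_eulerRemainder_le hA hX hrk
          (norm_eulerRemainder_le_of_small hα hα1 hτ hC hK₁ hL hLK hA hA₁ hX hY k r hrk hsmall)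
    _ ≤ L * ω ^ α + K * C * ω ^ α := by gcongr; exact hk2α.trans hkα
    _ = (L + K * C) * ω ^ α := by ring

theorem norm_sub_le_of_scale_lt {ω : ℝ} (hα : 1 / 2 < α) (hα1 : α ≤ 1) (hτ : 0 ≤ τ)
    (hNτ : N * τ ≤ 1) (hC : 0 ≤ C) (hK₁ : 0 ≤ K₁) (hL : 0 ≤ L)
    (hLK : K₁ * C * (K * C) = halvingGain α * L)
    (hA : ∀ y, ‖A y‖ ≤ K) (hA₁ : ∀ y z, ‖A y - A z‖ ≤ K₁ * ‖y - z‖)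
    (hX : ∀ r k, r + k ≤ N → ‖X (r + k) - X r‖ ≤ C * (k * τ) ^ α)
    (hY : ∀ k < N, Y (k + 1) = Y k + A (Y k) (X (k + 1) - X k))
    (hω : 0 < ω) (hωsmall : K₁ * C * ω ^ α ≤ halvingGain α) {r k : ℕ} (hrk : r + k ≤ N)
    (hk : ω < k * τ) :
    ‖Y (r + k) - Y r‖ ≤ 2 * (L + K * C) * ω ^ (α - 1) * (k * τ) := by
  have hKC : 0 ≤ K * C := mul_nonneg ((norm_nonneg _).trans (hA 0)) hC
  have hτ0 : 0 < τ := pos_of_mul_pos_right (hω.trans hk) k.cast_nonneg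
  have hkτ : k * τ ≤ 1 := le_trans (by gcongr; exact_mod_cast (by omega : k ≤ N)) hNτ
  rcases le_or_gt τ ω with hτω | hωτ
  · -- chain pieces of `q = ⌊ω / τ⌋₊` steps, each of length at most `ω`
    set q := ⌊ω / τ⌋₊
    have hq1 : 1 ≤ q := Nat.one_le_floor_iff _ |>.mpr ((one_le_div hτ0).mpr hτω)
    have hqτ : q * τ ≤ ω := (le_div_iff₀ hτ0).mp (Nat.floor_le (by positivity))
    have hωq : ω < (q + 1) * τ := (div_lt_iff₀ hτ0).mp (Nat.lt_floor_add_one _)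
    have hqk : q ≤ k := by exact_mod_cast (lt_of_mul_lt_mul_right (hqτ.trans_lt hk) hτ).le
    calc ‖Y (r + k) - Y r‖ ≤ 2 * k / (q + 1) * ((L + K * C) * ω ^ α) :=
          norm_sub_le_of_pieces hq1 hqk hrk fun a p hap hpq =>
            norm_sub_le_of_le_scale hα hα1 hτ hC hK₁ hL hLK hA hA₁ hX hY (hk.le.trans hkτ) hωsmall
              hap (le_trans (by gcongr) hqτ)
      _ ≤ 2 * (k * τ) / ω * ((L + K * C) * ω ^ α) := by
          gcongr ?_ * _
          rw [div_le_div_iff₀ (by positivity) hω]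
          nlinarith [mul_le_mul_of_nonneg_left hωq.le (by positivity : (0:ℝ) ≤ 2 * k)]
      _ = 2 * (L + K * C) * ω ^ (α - 1) * (k * τ) := by
          rw [rpow_sub_one hω.ne']
          ring
  · -- the mesh exceeds `ω`: chain single steps
    calc ‖Y (r + k) - Y r‖ ≤ k * (K * C * τ ^ α) := norm_sub_le_of_unit_steps hτ hC hA hX hY hrk
      _ = K * C * τ ^ (α - 1) * (k * τ) := by
          rw [rpow_sub_one hτ0.ne']
          field_simp
      _ ≤ K * C * ω ^ (α - 1) * (k * τ) :=
          mul_le_mul_of_nonneg_right (mul_le_mul_of_nonneg_left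
            (rpow_le_rpow_of_nonpos hω hωτ.le (by linarith)) hKC) (by positivity)
      _ ≤ 2 * (L + K * C) * ω ^ (α - 1) * (k * τ) := by
          gcongr ?_ * _ * _
          linarith

theorem norm_eulerRemainder_le_of_scale_lt {ω : ℝ} (hα : 1 / 2 < α) (hα1 : α ≤ 1) (hτ : 0 ≤ τ)
    (hNτ : N * τ ≤ 1) (hC : 0 ≤ C) (hK₁ : 0 ≤ K₁) (hL : 0 ≤ L)
    (hLK : K₁ * C * (K * C) = halvingGain α * L)
    (hA : ∀ y, ‖A y‖ ≤ K) (hA₁ : ∀ y z, ‖A y - A z‖ ≤ K₁ * ‖y - z‖)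
    (hX : ∀ r k, r + k ≤ N → ‖X (r + k) - X r‖ ≤ C * (k * τ) ^ α)
    (hY : ∀ k < N, Y (k + 1) = Y k + A (Y k) (X (k + 1) - X k))
    (hω : 0 < ω) (hωsmall : K₁ * C * ω ^ α ≤ halvingGain α) {r k : ℕ} (hrk : r + k ≤ N)
    (hk : ω < k * τ) :
    ‖eulerRemainder A Y X r (r + k)‖ ≤
        (2 * ω ^ (-α) + ω ^ (-1 - α)) * (L + K * C) * (k * τ) ^ (2 * α) ∧
      ‖eulerRemainder A Y X (r + k) r‖ ≤
        (2 * ω ^ (-α) + ω ^ (-1 - α)) * (L + K * C) * (k * τ) ^ (2 * α) := by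
  have hK : 0 ≤ K := (norm_nonneg _).trans (hA 0)
  have hkτ : k * τ ≤ 1 := le_trans (by gcongr; exact_mod_cast (by omega : k ≤ N)) hNτ
  have hYk := norm_sub_le_of_scale_lt hα hα1 hτ hNτ hC hK₁ hL hLK hA hA₁ hX hY hω hωsmall hrk hk
  have hXk := hX r k hrk
  have e1 := rpow_sub_one_mul_le hα.le hω hk.le
  have e2 := rpow_le_rpow_neg_one_sub_mul (α := α) (by linarith) hω (hk.le.trans hkτ) hk.le
  have hbound : ‖Y (r + k) - Y r‖ + K * ‖X (r + k) - X r‖ ≤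
      (2 * ω ^ (-α) + ω ^ (-1 - α)) * (L + K * C) * (k * τ) ^ (2 * α) := by
    have hLKC : 0 ≤ L + K * C := by positivity
    calc ‖Y (r + k) - Y r‖ + K * ‖X (r + k) - X r‖
        ≤ 2 * (L + K * C) * ω ^ (α - 1) * (k * τ) + K * C * (k * τ) ^ α := by
          rw [mul_assoc K C]; gcongr
      _ ≤ 2 * (L + K * C) * (ω ^ (-α) * (k * τ) ^ (2 * α)) +
            (L + K * C) * (ω ^ (-1 - α) * (k * τ) ^ (2 * α)) := by
          rw [mul_assoc _ (ω ^ (α - 1))]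
          gcongr
          linarith
      _ = _ := by ring
  constructor
  · exact (norm_eulerRemainder_le hA _ _).trans hbound
  · rw [← norm_sub_rev (Y r), ← norm_sub_rev (X r)] at hbound
    exact (norm_eulerRemainder_le hA _ _).trans hbound

theorem norm_eulerRemainder_le_rpow_of_pos {ω G : ℝ} (hα : 1 / 2 < α) (hα1 : α ≤ 1)
    (hτ : 0 ≤ τ) (hNτ : N * τ ≤ 1) (hC : 0 < C) (hK : 0 < K) (hK₁ : 0 < K₁)
    (hA : ∀ y, ‖A y‖ ≤ K) (hA₁ : ∀ y z, ‖A y - A z‖ ≤ K₁ * ‖y - z‖)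
    (hX : ∀ r k, r + k ≤ N → ‖X (r + k) - X r‖ ≤ C * (k * τ) ^ α)
    (hY : ∀ k < N, Y (k + 1) = Y k + A (Y k) (X (k + 1) - X k))
    (hL : L = 4 / (1 - 2 ^ (1 - 2 * α)) * (K * C) * (K₁ * C))
    (hω : ω = (K * C / L) ^ (1 / α))
    (hG : G = max ((2 * ω ^ (-α) + ω ^ (-1 - α)) * (L + K * C)) L) {r k : ℕ}
    (hrk : r + k ≤ N) :
    ‖eulerRemainder A Y X r (r + k)‖ ≤ G * (k * τ) ^ (2 * α) ∧
      ‖eulerRemainder A Y X (r + k) r‖ ≤ G * (k * τ) ^ (2 * α) := by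
  have hgain := halvingGain_pos hα
  have hLK : K₁ * C * (K * C) = halvingGain α * L := by
    have : (1:ℝ) - 2 ^ (1 - 2 * α) ≠ 0 := by unfold halvingGain at hgain; linarith
    rw [hL, halvingGain]
    field_simp
  have hL0 : 0 < L := pos_of_mul_pos_right (hLK ▸ by positivity) hgain.le
  have hω0 : 0 < ω := by rw [hω]; positivity
  have hωα : L * ω ^ α = K * C := by
    rw [hω, ← rpow_mul (by positivity), one_div_mul_cancel (by linarith), rpow_one]
    field_simp
  -- `ω` is the scale at which the relative size `K₁ C δ ^ α` of the cross term reaches the gain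
  have hωsmall : K₁ * C * ω ^ α = halvingGain α := by
    apply mul_left_cancel₀ hL0.ne'
    linear_combination K₁ * C * hωα + hLK
  have hG₁ : (2 * ω ^ (-α) + ω ^ (-1 - α)) * (L + K * C) ≤ G := hG ▸ le_max_left _ _
  rcases le_or_gt (k * τ) ω with hsmall | hlarge
  · have hsmall' : K₁ * C * (k * τ) ^ α ≤ halvingGain α := hωsmall ▸ by gcongr
    have hG₂ : 2 * L ≤ G := by
      have hinv : ω ^ (-α) * (K * C) = L := by
        rw [← hωα, rpow_neg hω0.le]
        field_simp
      have h₁ : 0 ≤ ω ^ (-α) * L := by positivity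
      have h₂ : 0 ≤ ω ^ (-1 - α) * (L + K * C) := by positivity
      linarith
    refine ⟨(norm_eulerRemainder_le_of_small hα hα1 hτ hC.le hK₁.le hL0.le hLK hA hA₁ hX hY k r
      hrk hsmall').trans (by gcongr; linarith), (norm_eulerRemainder_swap_le_of_small hα hα1 hτ
      hC.le hK₁.le hL0.le hLK hA hA₁ hX hY hrk hsmall').trans (by gcongr)⟩
  · obtain ⟨h₁, h₂⟩ := norm_eulerRemainder_le_of_scale_lt hα hα1 hτ hNτ hC.le hK₁.le hL0.le hLK
      hA hA₁ hX hY hω0 hωsmall.le hrk hlarge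
    exact ⟨h₁.trans (by gcongr), h₂.trans (by gcongr)⟩

theorem norm_eulerRemainder_le_rpow {ω G : ℝ} (hα : 1 / 2 < α) (hα1 : α ≤ 1) (hτ : 0 ≤ τ)
    (hNτ : N * τ ≤ 1) (hC : 0 < C) (hK₁ : 0 ≤ K₁)
    (hA : ∀ y, ‖A y‖ ≤ K) (hA₁ : ∀ y z, ‖A y - A z‖ ≤ K₁ * ‖y - z‖)
    (hX : ∀ r k, r + k ≤ N → ‖X (r + k) - X r‖ ≤ C * (k * τ) ^ α)
    (hY : ∀ k < N, Y (k + 1) = Y k + A (Y k) (X (k + 1) - X k))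
    (hL : L = 4 / (1 - 2 ^ (1 - 2 * α)) * (K * C) * (K₁ * C))
    (hω : ω = (K * C / L) ^ (1 / α))
    (hG : G = max ((2 * ω ^ (-α) + ω ^ (-1 - α)) * (L + K * C)) L) :
    ∀ r k, r + k ≤ N → ‖eulerRemainder A Y X r (r + k)‖ ≤ G * (k * τ) ^ (2 * α) ∧
      ‖eulerRemainder A Y X (r + k) r‖ ≤ G * (k * τ) ^ (2 * α) := by
  intro r k hrk
  have hK : 0 ≤ K := (norm_nonneg _).trans (hA 0)
  by_cases hdeg : K = 0 ∨ K₁ = 0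
  swap
  · push Not at hdeg
    exact norm_eulerRemainder_le_rpow_of_pos hα hα1 hτ hNτ hC (hK.lt_of_ne' hdeg.1)
      (hK₁.lt_of_ne' hdeg.2) hA hA₁ hX hY hL hω hG hrk
  have hconst : ∀ y z, A y = A z := by
    rcases hdeg with rfl | rfl
    · intro y z
      rw [norm_le_zero_iff.mp (hA y), norm_le_zero_iff.mp (hA z)]
    · intro y z
      simpa [sub_eq_zero] using hA₁ y z
  have hG0 : 0 ≤ G := hG ▸ le_max_of_le_right (by rcases hdeg with rfl | rfl <;> simp [hL])
  rw [eulerRemainder_eq_zero_of_const hY hconst (by omega) hrk,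
    eulerRemainder_eq_zero_of_const hY hconst hrk (by omega), norm_zero]
  exact ⟨mul_nonneg hG0 (by positivity), mul_nonneg hG0 (by positivity)⟩

theorem norm_eulerRemainder_le_abs_sub_rpow {ω G : ℝ} (hα : 1 / 2 < α) (hα1 : α ≤ 1)
    (hτ : 0 ≤ τ) (hNτ : N * τ ≤ 1) (hC : 0 < C) (hK₁ : 0 ≤ K₁)
    (hA : ∀ y, ‖A y‖ ≤ K) (hA₁ : ∀ y z, ‖A y - A z‖ ≤ K₁ * ‖y - z‖)
    (hX : ∀ r j, r ≤ N → j ≤ N → ‖X j - X r‖ ≤ C * |j * τ - r * τ| ^ α)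
    (hY : ∀ k < N, Y (k + 1) = Y k + A (Y k) (X (k + 1) - X k))
    (hL : L = 4 / (1 - 2 ^ (1 - 2 * α)) * (K * C) * (K₁ * C))
    (hω : ω = (K * C / L) ^ (1 / α))
    (hG : G = max ((2 * ω ^ (-α) + ω ^ (-1 - α)) * (L + K * C)) L) :
    ∀ r j, r ≤ N → j ≤ N → ‖eulerRemainder A Y X r j‖ ≤ G * |j * τ - r * τ| ^ (2 * α) := by
  have hgap : ∀ r k : ℕ, |((r + k : ℕ) : ℝ) * τ - r * τ| = k * τ := fun r k => by
    rw [Nat.cast_add, add_mul, add_sub_cancel_left, abs_of_nonneg (by positivity)]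
  have key := norm_eulerRemainder_le_rpow hα hα1 hτ hNτ hC hK₁ hA hA₁
    (fun r k hrk => hgap r k ▸ hX r (r + k) (by omega) hrk) hY hL hω hG
  intro r j hr hj
  rcases le_total r j with hrj | hjr
  · obtain ⟨k, rfl⟩ := Nat.exists_eq_add_of_le hrj
    rw [hgap]
    exact (key r k hj).1
  · obtain ⟨k, rfl⟩ := Nat.exists_eq_add_of_le hjr
    rw [abs_sub_comm, hgap]
    exact (key j k hr).2

end EulerScheme

theorem norm_mulVec_le {m n : Type*} [Fintype m] [Fintype n] {M : Matrix m n ℝ} {F : ℝ}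
    (hF : 0 ≤ F) (hM : ∀ i j, |M i j| ≤ F) (v : n → ℝ) :
    ‖M *ᵥ v‖ ≤ Fintype.card n * F * ‖v‖ := by
  refine (pi_norm_le_iff_of_nonneg (by positivity)).mpr fun i => ?_
  calc ‖(M *ᵥ v) i‖ = |∑ j, M i j * v j| := rfl
    _ ≤ ∑ j, |M i j| * ‖v j‖ := by
      simpa [abs_mul] using Finset.abs_sum_le_sum_abs (fun j => M i j * v j) Finset.univ
    _ ≤ ∑ _j : n, F * ‖v‖ := by
      gcongr with j
      exacts [hM i j, norm_le_pi_norm v j]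
    _ = Fintype.card n * F * ‖v‖ := by simp [mul_assoc]

theorem norm_toContinuousLinearMap_toLin'_le {m n : Type*} [Fintype m] [Fintype n] [DecidableEq n]
    {M : Matrix m n ℝ} {F : ℝ} (hF : 0 ≤ F) (hM : ∀ i j, |M i j| ≤ F) :
    ‖LinearMap.toContinuousLinearMap (Matrix.toLin' M)‖ ≤ Fintype.card n * F :=
  ContinuousLinearMap.opNorm_le_bound _ (by positivity) (norm_mulVec_le hF hM)

theorem vnorm_eq_norm {d : ℕ} (v : Fin d → ℝ) : vnorm v = ‖v‖ := by
  rcases isEmpty_or_nonempty (Fin d) with hd | hd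
  · simp [vnorm, Real.iSup_of_isEmpty, Subsingleton.elim v 0]
  · refine le_antisymm (ciSup_le fun i => norm_le_pi_norm v i) ?_
    exact (pi_norm_le_iff_of_nonneg (Real.iSup_nonneg fun i => abs_nonneg _)).mpr
      fun i => (norm_eq_abs _).trans_le (le_ciSup (Set.finite_range fun i => |v i|).bddAbove i)

theorem stmt14_general (d h : ℕ) (hd : 0 < d) (hh : 0 < h)
    (α Cα F F₁ : ℝ) (hα : 1/2 < α) (hα1 : α ≤ 1) (hCα : 0 < Cα)
    (x : ℝ → Fin h → ℝ)
    (hx : ∀ s t : ℝ, s ∈ Set.Icc (0:ℝ) 1 → t ∈ Set.Icc (0:ℝ) 1 →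
      vnorm (fun j => x s j - x t j) ≤ Cα * |s - t| ^ α)
    (f : (Fin d → ℝ) → Fin d → Fin h → ℝ)
    (hfb : ∀ y i j, |f y i j| ≤ F)
    (hfl : ∀ y z i j, |f y i j - f z i j| ≤ F₁ * vnorm (fun l => y l - z l))
    (y : ℕ → ℕ → Fin d → ℝ)
    (hyrec : ∀ n k : ℕ, k < 2 ^ n → ∀ i,
      y n (k + 1) i = y n k i +
        ∑ j, f (y n k) i j * (x (((k:ℝ) + 1) / 2 ^ n) j - x ((k:ℝ) / 2 ^ n) j))
    (L ω G₂ : ℝ)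
    (hL : L = 4 / (1 - (2:ℝ) ^ (1 - 2 * α)) * ((h:ℝ) * Cα) ^ 2 * F₁ * F)
    (hω : ω = ((h:ℝ) * F * Cα / L) ^ (1/α))
    (hG : G₂ = max ((2 * ω ^ (-α) + ω ^ (-1 - α)) * (L + (h:ℝ) * F * Cα)) L) :
    ∀ n r j : ℕ, r ≤ 2 ^ n → j ≤ 2 ^ n →
      vnorm (fun i => y n j i - y n r i -
          ∑ l, f (y n r) i l * (x ((j:ℝ) / 2 ^ n) l - x ((r:ℝ) / 2 ^ n) l)) ≤
        G₂ * |(j:ℝ) / 2 ^ n - (r:ℝ) / 2 ^ n| ^ (2 * α) := by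
  intro n
  have hF : 0 ≤ F := (abs_nonneg _).trans (hfb 0 ⟨0, hd⟩ ⟨0, hh⟩)
  have hF₁ : 0 ≤ F₁ := by
    have : Nonempty (Fin d) := ⟨⟨0, hd⟩⟩
    simpa [vnorm_eq_norm] using (abs_nonneg _).trans (hfl (fun _ => 1) 0 ⟨0, hd⟩ ⟨0, hh⟩)
  have h2n : (0:ℝ) < 2 ^ n := by positivity
  have hmem : ∀ a : ℕ, a ≤ 2 ^ n → (a : ℝ) / 2 ^ n ∈ Set.Icc (0:ℝ) 1 := fun a ha =>
    ⟨by positivity, div_le_one_of_le₀ (by exact_mod_cast ha) h2n.le⟩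
  have key := norm_eulerRemainder_le_abs_sub_rpow (Y := y n) (X := fun k : ℕ => x (k / 2 ^ n))
    (A := fun z => LinearMap.toContinuousLinearMap (Matrix.toLin' (Matrix.of (f z))))
    (N := 2 ^ n) (τ := (2 ^ n)⁻¹) (K := h * F) (K₁ := h * F₁) hα hα1 (by positivity)
    (by push_cast; rw [mul_inv_cancel₀ h2n.ne']) hCα (by positivity)
    (fun z => by simpa using norm_toContinuousLinearMap_toLin'_le (M := Matrix.of (f z)) hF (hfb z))
    (fun z w => by
      rw [← map_sub, ← map_sub]
      simpa [mul_assoc] using norm_toContinuousLinearMap_toLin'_le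
        (M := Matrix.of (f z - f w)) (by positivity)
        fun i l => (hfl z w i l).trans_eq (by rw [vnorm_eq_norm]; rfl))
    (fun a b ha hb => ((vnorm_eq_norm _).symm.trans_le (hx _ _ (hmem b hb) (hmem a ha))).trans_eq
      (by simp only [div_eq_mul_inv]))
    (fun k hk => funext fun i => by rw [hyrec n k hk i]; push_cast; rfl)
    (by rw [hL]; ring) hω hG
  intro r j hr hj
  rw [vnorm_eq_norm]
  exact (key r j hr hj).trans_eq (by simp only [div_eq_mul_inv])

/-- Lemma (second-order a priori bound for the Euler scheme): under the Euler-scheme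
setting, `‖y(t^n_j) − y(t^n_r) − f(y(t^n_r))·(x(t^n_j) − x(t^n_r))‖ ≤ G₂·|t^n_j − t^n_r|^{2α}`
with `G₂ = max{(2ω^{−α} + ω^{−1−α})·(L + hFC_α), L}`, `L = (4/(1 − 2^{1−2α}))·(hC_α)²·F₁·F`,
`ω = (hFC_α/L)^{1/α}`. -/
theorem stmt14 (d h : ℕ) (hd : 0 < d) (hh : 0 < h)
    (α Cα F F₁ : ℝ) (hα : 1/2 < α) (hα1 : α ≤ 1) (hCα : 0 < Cα)
    (x : ℝ → Fin h → ℝ)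
    (hx : ∀ s t : ℝ, s ∈ Set.Icc (0:ℝ) 1 → t ∈ Set.Icc (0:ℝ) 1 →
      vnorm (fun j => x s j - x t j) ≤ Cα * |s - t| ^ α)
    (f : (Fin d → ℝ) → Fin d → Fin h → ℝ)
    (hfb : ∀ y i j, |f y i j| ≤ F)
    (hfl : ∀ y z i j, |f y i j - f z i j| ≤ F₁ * vnorm (fun l => y l - z l))
    (y0 : Fin d → ℝ) (y : ℕ → ℕ → Fin d → ℝ)
    (hy0 : ∀ n, y n 0 = y0)
    (hyrec : ∀ n k : ℕ, k < 2 ^ n → ∀ i,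
      y n (k + 1) i = y n k i +
        ∑ j, f (y n k) i j * (x (((k:ℝ) + 1) / 2 ^ n) j - x ((k:ℝ) / 2 ^ n) j))
    (L ω G₂ : ℝ)
    (hL : L = 4 / (1 - (2:ℝ) ^ (1 - 2 * α)) * ((h:ℝ) * Cα) ^ 2 * F₁ * F)
    (hω : ω = ((h:ℝ) * F * Cα / L) ^ (1/α))
    (hG : G₂ = max ((2 * ω ^ (-α) + ω ^ (-1 - α)) * (L + (h:ℝ) * F * Cα)) L) :
    ∀ n r j : ℕ, r ≤ 2 ^ n → j ≤ 2 ^ n →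
      vnorm (fun i => y n j i - y n r i -
          ∑ l, f (y n r) i l * (x ((j:ℝ) / 2 ^ n) l - x ((r:ℝ) / 2 ^ n) l)) ≤
        G₂ * |(j:ℝ) / 2 ^ n - (r:ℝ) / 2 ^ n| ^ (2 * α) :=
  stmt14_general d h hd hh α Cα F F₁ hα hα1 hCα x hx f hfb hfl y hyrec L ω G₂ hL hω hG

end
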